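/- Helstrom limit for commuting (simultaneously diagonal) states equals the classical maximum-likelihood limit: Let (e_j)_{j=0}^{N−1} be an orthonormal basis of ℂ^N and for each n = 0,…,m−1 let ρ_n = Σ_{j=0}^{N−1} λ_{n,j}·e_j·e_jᴴ with λ_{n,j} ≥ 0 and Σ_j λ_{n,j} = 1 (so each ρ_n is a density matrix diagonal in the common basis). Then the Helstrom error probability of the equiprobable states (ρ_n)_{n=0}^{m−1} equals 1 − (1/m)·Σ_{j=0}^{N−1} max_{0≤n≤m−1} λ_{n,j}. -/

import Mathlib

open Matrix BigOperators Finset ComplexOrder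

noncomputable section

/-- A density matrix: positive semidefinite with unit trace. -/
def IsDensityMatrix {ι : Type*} [Fintype ι] (ρ : Matrix ι ι ℂ) : Prop :=
  ρ.PosSemidef ∧ ρ.trace = 1

/-- The Helstrom minimum error probability for discriminating the states `ρ n`
with prior probabilities `p n`, optimized over all POVMs. -/
def helstrom {ι : Type*} [Fintype ι] [DecidableEq ι] {m : ℕ}
    (ρ : Fin m → Matrix ι ι ℂ) (p : Fin m → ℝ) : ℝ :=
  1 - sSup { x : ℝ | ∃ M : Fin m → Matrix ι ι ℂ,
      (∀ n, (M n).PosSemidef) ∧ (∑ n, M n) = 1 ∧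
      x = ∑ n, p n * ((M n * ρ n).trace).re }

open Classical in
/-- The positive semidefinite square root (junk value `0` off the PSD cone). -/
def psdSqrt {ι : Type*} [Fintype ι] [DecidableEq ι] (A : Matrix ι ι ℂ) : Matrix ι ι ℂ :=
  if h : A.PosSemidef then
    (h.1.eigenvectorUnitary : Matrix ι ι ℂ) *
      diagonal ((↑) ∘ (Real.sqrt ·) ∘ h.1.eigenvalues) * (star h.1.eigenvectorUnitary : Matrix ι ι ℂ)
  else 0

/-- The trace norm `‖A‖₁ = tr √(Aᴴ A)`. -/
def traceNorm {ι : Type*} [Fintype ι] [DecidableEq ι] (A : Matrix ι ι ℂ) : ℝ :=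
  ((psdSqrt (Aᴴ * A)).trace).re


/-!
In the common eigenbasis `e`, a POVM `M` only matters through the numbers
`w n j = ⟨e j, M n e j⟩`, which are nonnegative and sum to `1` over `n`. The success probability
is then `∑ j ∑ n, p n * λ n j * w n j ≤ ∑ j, max_n p n * λ n j`, and measuring in the basis `e`
while guessing a maximiser of `n ↦ p n * λ n j` on outcome `j` attains the bound.
-/

section RankOne

variable {ι κ : Type*} [Fintype ι]

theorem Matrix.trace_mul_vecMulVec {R : Type*} [CommSemiring R] (M : Matrix ι ι R) (u v : ι → R) :
    (M * vecMulVec u v).trace = v ⬝ᵥ (M *ᵥ u) := by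
  rw [mul_vecMulVec, trace_vecMulVec, dotProduct_comm]

theorem Matrix.PosSemidef.re_dotProduct_mulVec_nonneg {M : Matrix ι ι ℂ} (hM : M.PosSemidef)
    (v : ι → ℂ) : 0 ≤ (star v ⬝ᵥ (M *ᵥ v)).re :=
  (Complex.nonneg_iff.mp (hM.dotProduct_mulVec_nonneg v)).1

theorem re_trace_mul_sum_smul_vecMulVec [Fintype κ] (M : Matrix ι ι ℂ) (e : κ → ι → ℂ)
    (lam : κ → ℝ) :
    (M * ∑ j, (lam j : ℂ) • vecMulVec (e j) (star (e j))).trace.re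
      = ∑ j, lam j * (star (e j) ⬝ᵥ (M *ᵥ e j)).re := by
  simp only [Finset.mul_sum, Matrix.mul_smul, trace_sum, trace_smul, trace_mul_vecMulVec,
    Complex.re_sum, smul_eq_mul, Complex.re_ofReal_mul]

theorem sum_re_dotProduct_mulVec_eq_one [DecidableEq ι] {m : ℕ} {M : Fin m → Matrix ι ι ℂ}
    (hM : ∑ n, M n = 1) {v : ι → ℂ} (hv : star v ⬝ᵥ v = 1) :
    ∑ n, (star v ⬝ᵥ (M n *ᵥ v)).re = 1 := by
  rw [← Complex.re_sum, ← dotProduct_sum, ← sum_mulVec, hM, one_mulVec, hv, Complex.one_re]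

end RankOne

theorem sum_mul_le_ciSup_of_sum_eq_one {κ : Type*} [Fintype κ] (a w : κ → ℝ) (hw : ∀ n, 0 ≤ w n)
    (hw1 : ∑ n, w n = 1) : ∑ n, a n * w n ≤ ⨆ n, a n :=
  calc ∑ n, a n * w n ≤ ∑ n, (⨆ n, a n) * w n :=
        Finset.sum_le_sum fun n _ =>
          mul_le_mul_of_nonneg_right (le_ciSup (Finite.bddAbove_range a) n) (hw n)
    _ = ⨆ n, a n := by rw [← Finset.mul_sum, hw1, mul_one]

section OrthonormalBasis

variable {ι : Type*} [Fintype ι] [DecidableEq ι] {e : ι → ι → ℂ}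
  (he : ∀ j j', star (e j) ⬝ᵥ e j' = if j = j' then 1 else 0)
include he

theorem sum_vecMulVec_self_star_eq_one : ∑ j, vecMulVec (e j) (star (e j)) = 1 := by
  set U : Matrix ι ι ℂ := of fun k j => e j k
  have hU : Uᴴ * U = 1 := by
    ext j j'
    simpa [U, mul_apply, one_apply, dotProduct] using he j j'
  rw [← mul_eq_one_comm.mp hU]
  ext a b
  simp [U, mul_apply, Matrix.sum_apply, vecMulVec_apply]

theorem dotProduct_sum_vecMulVec_mulVec (s : Finset ι) (j : ι) :
    star (e j) ⬝ᵥ ((∑ i ∈ s, vecMulVec (e i) (star (e i))) *ᵥ e j) = if j ∈ s then 1 else 0 := by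
  simp only [sum_mulVec, vecMulVec_mulVec, he, op_smul_eq_smul, dotProduct_sum, dotProduct_smul,
    smul_eq_mul, ite_mul, one_mul, zero_mul, Finset.sum_ite_eq', if_true]

end OrthonormalBasis

section BasisMeasurement

variable {ι : Type*} [Fintype ι] {m : ℕ}

def basisPOVM (e : ι → ι → ℂ) (g : ι → Fin m) (n : Fin m) : Matrix ι ι ℂ :=
  ∑ j with g j = n, vecMulVec (e j) (star (e j))

theorem basisPOVM_posSemidef (e : ι → ι → ℂ) (g : ι → Fin m) (n : Fin m) :
    (basisPOVM e g n).PosSemidef :=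
  posSemidef_sum _ fun j _ => posSemidef_vecMulVec_self_star (e j)

variable [DecidableEq ι] {e : ι → ι → ℂ}
  (he : ∀ j j', star (e j) ⬝ᵥ e j' = if j = j' then 1 else 0)
include he

theorem sum_basisPOVM (g : ι → Fin m) : ∑ n, basisPOVM e g n = 1 := by
  simp only [basisPOVM]
  rw [Finset.sum_fiberwise, sum_vecMulVec_self_star_eq_one he]

theorem dotProduct_basisPOVM_mulVec (g : ι → Fin m) (n : Fin m) (j : ι) :
    star (e j) ⬝ᵥ (basisPOVM e g n *ᵥ e j) = if g j = n then 1 else 0 := by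
  simp only [basisPOVM, dotProduct_sum_vecMulVec_mulVec he, Finset.mem_filter_univ]

end BasisMeasurement

section CommutingStates

variable {ι : Type*} [Fintype ι] [DecidableEq ι] {m : ℕ} {e : ι → ι → ℂ}
  (he : ∀ j j', star (e j) ⬝ᵥ e j' = if j = j' then 1 else 0) (lam : Fin m → ι → ℝ)
  (p : Fin m → ℝ)
include he

theorem sum_re_trace_mul_le_sum_ciSup {M : Fin m → Matrix ι ι ℂ} (hM : ∀ n, (M n).PosSemidef)
    (hsum : ∑ n, M n = 1) :
    ∑ n, p n * (M n * ∑ j, (lam n j : ℂ) • vecMulVec (e j) (star (e j))).trace.re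
      ≤ ∑ j, ⨆ n, p n * lam n j :=
  calc _ = ∑ j, ∑ n, p n * lam n j * (star (e j) ⬝ᵥ (M n *ᵥ e j)).re := by
        simp_rw [re_trace_mul_sum_smul_vecMulVec, Finset.mul_sum, mul_assoc]
        exact Finset.sum_comm
    _ ≤ _ := Finset.sum_le_sum fun j _ =>
        sum_mul_le_ciSup_of_sum_eq_one _ _ (fun n => (hM n).re_dotProduct_mulVec_nonneg (e j))
          (sum_re_dotProduct_mulVec_eq_one hsum ((he j j).trans (if_pos rfl)))

theorem sum_re_trace_basisPOVM_mul (g : ι → Fin m) :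
    ∑ n, p n * (basisPOVM e g n * ∑ j, (lam n j : ℂ) • vecMulVec (e j) (star (e j))).trace.re
      = ∑ j, p (g j) * lam (g j) j := by
  simp_rw [re_trace_mul_sum_smul_vecMulVec, dotProduct_basisPOVM_mulVec he, Finset.mul_sum]
  rw [Finset.sum_comm]
  refine Finset.sum_congr rfl fun j _ => ?_
  simp [apply_ite Complex.re]

theorem helstrom_sum_smul_vecMulVec [NeZero m] :
    helstrom (fun n => ∑ j, (lam n j : ℂ) • vecMulVec (e j) (star (e j))) p
      = 1 - ∑ j, ⨆ n, p n * lam n j := by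
  choose g hg using fun j => exists_eq_ciSup_of_finite (f := fun n => p n * lam n j)
  refine congrArg (1 - ·) (IsGreatest.csSup_eq ⟨⟨basisPOVM e g, basisPOVM_posSemidef e g,
    sum_basisPOVM he g, ?_⟩, ?_⟩)
  · rw [sum_re_trace_basisPOVM_mul he, Finset.sum_congr rfl fun j _ => hg j]
  · rintro _ ⟨M, hM, hsum, rfl⟩
    exact sum_re_trace_mul_le_sum_ciSup he lam p hM hsum

end CommutingStates

theorem helstrom_commuting_general {N m : ℕ} (hm : 1 ≤ m)
    (e : Fin N → Fin N → ℂ)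
    (he : ∀ j j', ∑ k, star (e j k) * e j' k = if j = j' then 1 else 0)
    (lam : Fin m → Fin N → ℝ) :
    helstrom (fun n => ∑ j, (lam n j : ℂ) • Matrix.vecMulVec (e j) (star (e j)))
        (fun _ => 1/(m:ℝ))
      = 1 - (1/(m:ℝ)) * ∑ j, sSup (Set.range fun n => lam n j) := by
  have : NeZero m := ⟨by omega⟩
  rw [helstrom_sum_smul_vecMulVec he, Finset.mul_sum]
  refine congrArg (1 - ·) (Finset.sum_congr rfl fun j _ => ?_)
  exact (Real.mul_iSup_of_nonneg (by positivity) _).symm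

/-- Helstrom limit for commuting (simultaneously diagonal) states equals the
classical maximum-likelihood limit. -/
theorem helstrom_commuting {N m : ℕ} (hm : 1 ≤ m)
    (e : Fin N → Fin N → ℂ)
    (he : ∀ j j', ∑ k, star (e j k) * e j' k = if j = j' then 1 else 0)
    (lam : Fin m → Fin N → ℝ)
    (hlam : ∀ n j, 0 ≤ lam n j) (hsum : ∀ n, ∑ j, lam n j = 1) :
    helstrom (fun n => ∑ j, (lam n j : ℂ) • Matrix.vecMulVec (e j) (star (e j)))
        (fun _ => 1/(m:ℝ))
      = 1 - (1/(m:ℝ)) * ∑ j, sSup (Set.range fun n => lam n j) :=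
  helstrom_commuting_general hm e he lam
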